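/- Let A be a finite-dimensional Hopf algebra over a field k, let λ : A → k be a left integral in the dual, and let Λ ∈ A be a right integral with λ(Λ) = 1. Then λ(1) · ε(Λ) equals the trace of the k-linear endomorphism S ∘ S of A. Consequently, the invariant of the trivial genus-1 handlebody-knot, given by λ(S(Λ₍₁₎) Λ₍₂₎), equals Trace(S²), and equals (dim_k A)·1 when S is an involution. -/

import Mathlib

/-!
From the left integral `λ` and the antipode axiom one gets `x = λ(Λ₍₂₎ x) S(Λ₍₁₎)` for all `x`,
so `S(Λ₍₁₎)` and `λ(Λ₍₂₎ ·)` behave like a basis and its dual basis for the form `(y, x) ↦ λ(y x)`.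
In finite dimension this form is then nondegenerate on both sides, which gives the mirrored
expansion `y = λ(y S(Λ₍₁₎)) Λ₍₂₎` and hence `Trace f = λ(f(Λ₍₂₎) S(Λ₍₁₎))`. For `f = S²` the
argument of `λ` is `S(Λ₍₁₎ S(Λ₍₂₎)) = ε(Λ) · 1`.
-/

open scoped TensorProduct

namespace LinearMap

section

variable {R M : Type*} [CommRing R] [AddCommGroup M] [Module R M] [Module.Free R M]
  [Module.Finite R M] {ι : Type*}

theorem trace_eq_sum_of_sum_smul_eq_self (s : Finset ι) (φ : ι → Module.Dual R M) (v : ι → M)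
    (h : ∀ x, ∑ i ∈ s, φ i x • v i = x) (g : M →ₗ[R] M) :
    trace R M g = ∑ i ∈ s, φ i (g (v i)) := by
  have hg : g = ∑ i ∈ s, (φ i).smulRight (g (v i)) := by
    ext x
    conv_lhs => rw [← h x]
    simp [map_sum]
  conv_lhs => rw [hg]
  simp [map_sum]

end

section

variable {K V : Type*} [Field K] [AddCommGroup V] [Module K V] [FiniteDimensional K V] {ι : Type*}

theorem sum_apply_smul_eq_self_of_sum_smul_apply_eq_self (B : V →ₗ[K] V →ₗ[K] K) (s : Finset ι)
    (e f : ι → V) (h : ∀ x, ∑ i ∈ s, B (f i) x • e i = x) (y : V) :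
    ∑ i ∈ s, B y (e i) • f i = y := by
  have hinj : Function.Injective B.flip := by
    rw [← LinearMap.ker_eq_bot, LinearMap.ker_eq_bot']
    intro x hx
    rw [← h x]
    simp [← B.flip_apply, hx]
  have hsurj : Function.Surjective B.flip :=
    (LinearMap.injective_iff_surjective_of_finrank_eq_finrank Subspace.dual_finrank_eq.symm).mp hinj
  rw [← sub_eq_zero, ← Module.forall_dual_apply_eq_zero_iff K]
  intro φ
  obtain ⟨x, rfl⟩ := hsurj φ
  rw [flip_apply, map_sub, sub_apply, sub_eq_zero]
  conv_rhs => rw [← h x]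
  simp [map_sum, mul_comm]

end

end LinearMap

namespace Coalgebra

variable {R C : Type*} [CommSemiring R] [AddCommMonoid C] [Module R C] [Coalgebra R C] {ι : Type*}

theorem sum_counit_right_smul {c : C} (r : Repr R c ι) :
    ∑ i ∈ r.index, counit (R := R) (r.right i) • r.left i = c := by
  simpa only [map_sum, _root_.TensorProduct.rid_tmul, one_smul] using
    congrArg (_root_.TensorProduct.rid R C) (sum_tmul_counit_eq r)

end Coalgebra

namespace HopfAlgebra

open Coalgebra WithConv

section

variable {k A : Type*} [CommSemiring k] [Semiring A] [HopfAlgebra k A] {ι κ : Type*}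

def IsLeftIntegralInDual (lam : A →ₗ[k] k) : Prop :=
  ∀ a : A, TensorProduct.rid k A (lam.lTensor A (comul a)) = lam a • 1

variable (k) in
def IsRightIntegral (Λ : A) : Prop :=
  ∀ a : A, Λ * a = counit (R := k) a • Λ

namespace IsLeftIntegralInDual

variable {lam : A →ₗ[k] k}

theorem sum_smul_left (hlam : IsLeftIntegralInDual lam) {a : A} (r : Repr k a ι) :
    ∑ i ∈ r.index, lam (r.right i) • r.left i = lam a • 1 := by
  simpa [← r.eq, map_sum] using hlam a

theorem sum_apply_mul_smul_eq_sum_apply_mul_smul_antipode (hlam : IsLeftIntegralInDual lam)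
    {a b : A} (ra : Repr k a ι) (rb : Repr k b κ) :
    ∑ j ∈ rb.index, lam (a * rb.right j) • rb.left j =
      ∑ i ∈ ra.index, lam (ra.right i * b) • antipode k (ra.left i) := by
  set ψ : A →ₗ[k] A :=
    ∑ j ∈ rb.index, (lam ∘ₗ LinearMap.mulRight k (rb.right j)).smulRight (rb.left j)
  set χ : A →ₗ[k] A := (lam ∘ₗ LinearMap.mulRight k b).smulRight 1
  -- In the convolution algebra `id * ψ = χ` is the integral property of `λ`, so `ψ = S * χ`.
  have hψ : toConv LinearMap.id * toConv ψ = toConv χ := by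
    ext x
    rw [(ℛ k x).convMul_apply]
    simpa [ψ, χ, Finset.mul_sum, Finset.sum_product, mul_assoc] using
      hlam.sum_smul_left ((ℛ k x).mul rb)
  have hSχ : toConv ψ = toConv (antipode k) * toConv χ := by
    rw [← hψ, ← mul_assoc, LinearMap.antipode_mul_id, one_mul]
  simpa [ψ, χ, ra.convMul_apply] using congr($hSχ a)

end IsLeftIntegralInDual

variable {lam : A →ₗ[k] k} {Λ : A}

theorem sum_apply_mul_smul_antipode_of_isRightIntegral (hlam : IsLeftIntegralInDual lam)
    (hΛ : IsRightIntegral k Λ) (hΛ1 : lam Λ = 1) (r : Repr k Λ ι) (x : A) :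
    ∑ i ∈ r.index, lam (r.right i * x) • antipode k (r.left i) = x := by
  rw [← hlam.sum_apply_mul_smul_eq_sum_apply_mul_smul_antipode r (ℛ k x)]
  simp [hΛ _, hΛ1, sum_counit_right_smul]

end

section Field

variable {k A : Type*} [Field k] [Ring A] [HopfAlgebra k A] [FiniteDimensional k A] {ι : Type*}
  {lam : A →ₗ[k] k} {Λ : A}

theorem sum_apply_mul_antipode_smul_of_isRightIntegral (hlam : IsLeftIntegralInDual lam)
    (hΛ : IsRightIntegral k Λ) (hΛ1 : lam Λ = 1) (r : Repr k Λ ι) (y : A) :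
    ∑ i ∈ r.index, lam (y * antipode k (r.left i)) • r.right i = y :=
  LinearMap.sum_apply_smul_eq_self_of_sum_smul_apply_eq_self ((LinearMap.mul k A).compr₂ lam)
    r.index _ _ (sum_apply_mul_smul_antipode_of_isRightIntegral hlam hΛ hΛ1 r) y

theorem trace_eq_sum_of_isRightIntegral (hlam : IsLeftIntegralInDual lam)
    (hΛ : IsRightIntegral k Λ) (hΛ1 : lam Λ = 1) (r : Repr k Λ ι) (g : A →ₗ[k] A) :
    LinearMap.trace k A g = ∑ i ∈ r.index, lam (g (r.right i) * antipode k (r.left i)) :=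
  LinearMap.trace_eq_sum_of_sum_smul_eq_self r.index
    (fun i ↦ lam ∘ₗ LinearMap.mulRight k (antipode k (r.left i))) r.right
    (sum_apply_mul_antipode_smul_of_isRightIntegral hlam hΛ hΛ1 r) g

theorem trace_antipode_comp_antipode (hlam : IsLeftIntegralInDual lam)
    (hΛ : IsRightIntegral k Λ) (hΛ1 : lam Λ = 1) :
    LinearMap.trace k A (antipode k ∘ₗ antipode k) = lam 1 * counit (R := k) Λ := by
  rw [trace_eq_sum_of_isRightIntegral hlam hΛ hΛ1 (ℛ k Λ)]
  simp_rw [LinearMap.comp_apply, ← antipode_mul_antidistrib, ← map_sum, sum_mul_antipode_eq_smul]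
  simp [mul_comm]

end Field

end HopfAlgebra

/-- Let `A` be a finite-dimensional Hopf algebra over a field `k`, `λ` a
left integral in the dual and `Λ` a right integral with `λ(Λ) = 1`.  Then
`λ(1) ε(Λ) = Trace(S²)`; consequently the invariant of the trivial genus-1 handlebody-knot,
`λ(S(Λ₍₁₎) Λ₍₂₎)`, equals `Trace(S²)`, and equals `(dim_k A) • 1` when `S` is an
involution. -/
theorem invariant_trivial_handlebody_knot (k A : Type*) [Field k] [Ring A] [HopfAlgebra k A]
    [FiniteDimensional k A]
    (lam : A →ₗ[k] k)
    (hlam : ∀ a : A, (TensorProduct.rid k A)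
        ((LinearMap.lTensor A lam) (Coalgebra.comul (R := k) a)) = lam a • 1)
    (Λ : A) (hΛ : ∀ a : A, Λ * a = Coalgebra.counit (R := k) a • Λ)
    (hΛ1 : lam Λ = 1) :
    lam 1 * Coalgebra.counit (R := k) Λ =
      LinearMap.trace k A (HopfAlgebra.antipode (R := k) ∘ₗ HopfAlgebra.antipode (R := k)) ∧
    lam ((LinearMap.mul' k A)
        (TensorProduct.map (HopfAlgebra.antipode (R := k)) LinearMap.id
          (Coalgebra.comul (R := k) Λ))) =
      LinearMap.trace k A (HopfAlgebra.antipode (R := k) ∘ₗ HopfAlgebra.antipode (R := k)) ∧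
    ((∀ a : A, HopfAlgebra.antipode (R := k) (HopfAlgebra.antipode (R := k) a) = a) →
      lam ((LinearMap.mul' k A)
          (TensorProduct.map (HopfAlgebra.antipode (R := k)) LinearMap.id
            (Coalgebra.comul (R := k) Λ))) = (Module.finrank k A : k)) := by
  have htrace := HopfAlgebra.trace_antipode_comp_antipode hlam hΛ hΛ1
  have hknot : lam (LinearMap.mul' k A
      ((HopfAlgebra.antipode k).rTensor A (Coalgebra.comul (R := k) Λ))) =
        lam 1 * Coalgebra.counit (R := k) Λ := by
    rw [HopfAlgebra.mul_antipode_rTensor_comul_apply, Algebra.algebraMap_eq_smul_one, map_smul,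
      smul_eq_mul, mul_comm]
  rw [← LinearMap.rTensor_def, hknot, ← htrace]
  refine ⟨rfl, rfl, fun hinvol => ?_⟩
  have hSS : HopfAlgebra.antipode k ∘ₗ HopfAlgebra.antipode k = LinearMap.id :=
    LinearMap.ext hinvol
  rw [hSS, LinearMap.trace_id]
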